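/- For a polynomial π of degree at most k+n (k, n ≥ 0) of the form σ = Δ τ - Σ_{ℓ=0}^{n-1} G_ℓ Δ^ℓ D τ where τ has degree at most k+n+1, the coefficients σ[j] vanish for all j = k+1, ..., k+n; equivalently, for j in this range and m = j, ..., k+n, the factor 1 - (m+1-j) Σ_{ℓ=0}^{n-1} G_ℓ ℓ! S(m-j, ℓ) equals 0. -/

import Mathlib

open Polynomial Finset

/-- Forward difference operator on functions ℝ → ℝ. -/
noncomputable def fdiff (f : ℝ → ℝ) : ℝ → ℝ := fun x => f (x + 1) - f x

/-- Forward difference operator on real polynomials: (Δπ)(x) = π(x+1) - π(x). -/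
noncomputable def polyDelta (p : Polynomial ℝ) : Polynomial ℝ := p.comp (X + 1) - p

/-- Unsigned Stirling numbers of the first kind. -/
def stirling1 : ℕ → ℕ → ℕ
  | 0, 0 => 1
  | 0, _ + 1 => 0
  | _ + 1, 0 => 0
  | n + 1, m + 1 => n * stirling1 n (m + 1) + stirling1 n m

/-- Stirling numbers of the second kind, via the explicit formula. -/
noncomputable def stirling2 (n m : ℕ) : ℝ :=
  (1 / (m.factorial : ℝ)) *
    ∑ j ∈ Finset.range (m + 1), (m.choose j : ℝ) * (-1) ^ (m - j) * (j : ℝ) ^ n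

/-- Gregory coefficients. -/
noncomputable def gregory (n : ℕ) : ℝ :=
  (1 / (n.factorial : ℝ)) *
    ∑ j ∈ Finset.range (n + 1), (stirling1 n j : ℝ) * (-1) ^ (n - j) / ((j : ℝ) + 1)

noncomputable def Aa (ℓ d : ℕ) : ℝ :=
  ∑ i ∈ Finset.range (ℓ+1), (ℓ.choose i : ℝ) * (-1)^(ℓ - i) * (i:ℝ)^d

lemma altsum (m K : ℕ) (hK : m < K) :
    ∑ t ∈ Finset.range K, (-1:ℝ)^t * (m.choose t : ℝ) = if m = 0 then 1 else 0 := by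
  rw [← Finset.sum_subset (Finset.range_subset_range.2 hK)
    (fun t _ ht => by rw [Nat.choose_eq_zero_of_lt (by simpa using ht), Nat.cast_zero, mul_zero])]
  have h := add_pow (-1 : ℝ) 1 m
  simp only [neg_add_cancel, one_pow, mul_one] at h
  rw [← h]
  rcases Nat.eq_zero_or_pos m with rfl | hm
  · simp
  · rw [zero_pow hm.ne', if_neg hm.ne']

lemma Aa_zero (ℓ : ℕ) (hℓ : 1 ≤ ℓ) : Aa ℓ 0 = 0 := by
  unfold Aa
  have h := add_pow (1 : ℝ) (-1) ℓ
  simp only [add_neg_cancel, one_pow, one_mul] at h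
  rw [zero_pow (by omega)] at h
  have e : ∑ i ∈ Finset.range (ℓ+1), (ℓ.choose i : ℝ) * (-1)^(ℓ - i) * (i:ℝ)^0
      = ∑ i ∈ Finset.range (ℓ+1), (-1:ℝ)^(ℓ-i) * (ℓ.choose i : ℝ) :=
    Finset.sum_congr rfl fun i _ => by ring
  rw [e, ← h]

lemma Aa_rec (ℓ d : ℕ) :
    Aa (ℓ+1) (d+1) = (ℓ+1 : ℝ) * ∑ s ∈ Finset.range (d+1), (d.choose s : ℝ) * Aa ℓ s := by
  unfold Aa
  rw [Finset.sum_range_succ']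
  simp only [Nat.cast_zero, zero_pow (Nat.succ_ne_zero d), mul_zero, add_zero]
  have key : ∀ t ∈ Finset.range (ℓ+1),
      ((ℓ+1).choose (t+1) : ℝ) * (-1)^(ℓ+1-(t+1)) * (((t+1 : ℕ)):ℝ)^(d+1)
      = (ℓ+1 : ℝ) * ∑ s ∈ Finset.range (d+1),
          (d.choose s : ℝ) * ((ℓ.choose t : ℝ) * (-1)^(ℓ-t) * (t:ℝ)^s) := by
    intro t _
    push_cast
    have h1 : ((ℓ+1).choose (t+1) : ℝ) * ((t:ℝ)+1) = (ℓ+1 : ℝ) * (ℓ.choose t : ℝ) := by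
      have h2 : (ℓ+1).choose (t+1) * (t+1) = (ℓ+1) * ℓ.choose t :=
        (Nat.add_one_mul_choose_eq ℓ t).symm
      exact_mod_cast h2
    have h3 : ((t:ℝ)+1)^d = ∑ s ∈ Finset.range (d+1), (d.choose s : ℝ) * (t:ℝ)^s := by
      have := add_pow (t:ℝ) 1 d
      simp only [one_pow, mul_one] at this
      rw [this]
      exact Finset.sum_congr rfl fun s _ => by ring
    calc ((ℓ+1).choose (t+1) : ℝ) * (-1)^(ℓ-t) * ((t:ℝ)+1)^(d+1)
        = (((ℓ+1).choose (t+1) : ℝ) * ((t:ℝ)+1)) * (-1)^(ℓ-t) * ((t:ℝ)+1)^d := by ring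
      _ = (ℓ+1 : ℝ) * (ℓ.choose t : ℝ) * (-1)^(ℓ-t) * ((t:ℝ)+1)^d := by rw [h1]
      _ = _ := by
          rw [h3, Finset.mul_sum, Finset.mul_sum]
          exact Finset.sum_congr rfl fun s _ => by ring
  rw [Finset.sum_congr rfl key]
  rw [← Finset.mul_sum, Finset.sum_comm]
  congr 1
  exact Finset.sum_congr rfl fun s _ => by rw [Finset.mul_sum]

lemma Aa_vanish : ∀ ℓ d : ℕ, d < ℓ → Aa ℓ d = 0 := by
  intro ℓ
  induction ℓ with
  | zero => intro d hd; omega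
  | succ ℓ ih =>
    intro d hd
    cases d with
    | zero => exact Aa_zero (ℓ+1) (by omega)
    | succ d =>
      rw [Aa_rec]
      rw [Finset.sum_eq_zero fun s hs => by
        rw [ih s (by simp at hs; omega), mul_zero]]
      ring

lemma choose_mul' (N i t : ℕ) :
    N.choose (i+t) * (i+t).choose i = N.choose i * (N-i).choose t := by
  rcases le_or_gt (i+t) N with h | h
  · have := Nat.choose_mul (n := N) (Nat.le_add_right i t)
    simpa using this
  · rcases le_or_gt i N with h2 | h2
    · rw [Nat.choose_eq_zero_of_lt h, Nat.choose_eq_zero_of_lt (show N - i < t by omega),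
        zero_mul, mul_zero]
    · rw [Nat.choose_eq_zero_of_lt h2, Nat.choose_eq_zero_of_lt (by omega), zero_mul, zero_mul]

lemma comb (d N : ℕ) :
    ∑ ℓ ∈ Finset.range (d+1), Aa ℓ d * (N.choose ℓ : ℝ) = (N:ℝ)^d := by
  set M := N + d + 1 with hM
  have h1 : ∑ ℓ ∈ Finset.range (d+1), Aa ℓ d * (N.choose ℓ:ℝ)
      = ∑ ℓ ∈ Finset.range M, Aa ℓ d * (N.choose ℓ:ℝ) :=
    Finset.sum_subset (Finset.range_subset_range.2 (by omega))
      (fun ℓ hℓ hℓ' => by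
        rw [Aa_vanish ℓ d (by simp only [Finset.mem_range] at hℓ'; omega), zero_mul])
  have h2 : ∀ ℓ ∈ Finset.range M, Aa ℓ d * (N.choose ℓ:ℝ)
      = ∑ i ∈ Finset.range M, ((N.choose ℓ:ℝ) * ((ℓ.choose i:ℝ)*(-1)^(ℓ-i)*(i:ℝ)^d)) := by
    intro ℓ hℓ
    rw [Aa, Finset.sum_mul]
    rw [← Finset.sum_subset (Finset.range_subset_range.2 (show ℓ+1 ≤ M by
        simp only [Finset.mem_range] at hℓ; omega))
      (fun i _ hi => by
        rw [Nat.choose_eq_zero_of_lt (show ℓ < i by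
          simp only [Finset.mem_range] at hi; omega)]
        simp)]
    exact Finset.sum_congr rfl fun i _ => by ring
  have h3 : ∀ i ∈ Finset.range M,
      (∑ ℓ ∈ Finset.range M, ((N.choose ℓ:ℝ) * ((ℓ.choose i:ℝ)*(-1)^(ℓ-i)*(i:ℝ)^d)))
      = (N.choose i:ℝ) * (i:ℝ)^d * (if N-i = 0 then 1 else 0) := by
    intro i hi
    simp only [Finset.mem_range] at hi
    have split : ∑ ℓ ∈ Finset.range M, ((N.choose ℓ:ℝ) * ((ℓ.choose i:ℝ)*(-1)^(ℓ-i)*(i:ℝ)^d))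
        = ∑ ℓ ∈ Finset.Ico i M, ((N.choose ℓ:ℝ) * ((ℓ.choose i:ℝ)*(-1)^(ℓ-i)*(i:ℝ)^d)) := by
      rw [Finset.range_eq_Ico,
        ← Finset.sum_Ico_consecutive _ (Nat.zero_le i) (le_of_lt hi)]
      rw [Finset.sum_eq_zero (fun ℓ hℓ => by
        rw [Nat.choose_eq_zero_of_lt (Finset.mem_Ico.1 hℓ).2]
        simp), zero_add]
    rw [split, Finset.sum_Ico_eq_sum_range]
    have term : ∀ t, ((N.choose (i+t):ℝ) * (((i+t).choose i:ℝ)*(-1)^((i+t)-i)*(i:ℝ)^d))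
        = ((N.choose i:ℝ) * (i:ℝ)^d) * ((-1)^t * ((N-i).choose t : ℝ)) := by
      intro t
      have : ((i+t)-i) = t := by omega
      rw [this]
      have hc : ((N.choose (i+t) * (i+t).choose i : ℕ) : ℝ)
          = ((N.choose i * (N-i).choose t : ℕ) : ℝ) := by rw [choose_mul']
      push_cast at hc
      linear_combination ((-1:ℝ)^t * (i:ℝ)^d) * hc
    calc ∑ t ∈ Finset.range (M - i),
          ((N.choose (i+t):ℝ) * (((i+t).choose i:ℝ)*(-1)^((i+t)-i)*(i:ℝ)^d))
        = ∑ t ∈ Finset.range (M - i),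
          ((N.choose i:ℝ) * (i:ℝ)^d) * ((-1)^t * ((N-i).choose t : ℝ)) :=
          Finset.sum_congr rfl fun t _ => term t
      _ = ((N.choose i:ℝ) * (i:ℝ)^d) *
          ∑ t ∈ Finset.range (M - i), ((-1:ℝ)^t * ((N-i).choose t : ℝ)) := by
          rw [Finset.mul_sum]
      _ = (N.choose i:ℝ) * (i:ℝ)^d * (if N-i = 0 then 1 else 0) := by
          rw [altsum (N-i) (M-i) (by omega)]
  rw [h1, Finset.sum_congr rfl h2, Finset.sum_comm, Finset.sum_congr rfl h3]
  rw [Finset.sum_eq_single N]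
  · simp
  · intro i _ hiN
    rcases lt_or_gt_of_ne hiN with h | h
    · rw [if_neg (by omega), mul_zero]
    · rw [Nat.choose_eq_zero_of_lt h]
      simp
  · intro hN
    exact absurd (Finset.mem_range.2 (by omega)) hN

lemma stirling1_eq_zero : ∀ {n m : ℕ}, n < m → stirling1 n m = 0 := by
  intro n
  induction n with
  | zero => intro m hm; match m, hm with
    | m + 1, _ => rfl
  | succ n ih =>
    intro m hm
    match m, hm with
    | m + 1, hm =>
      show n * stirling1 n (m + 1) + stirling1 n m = 0
      rw [ih (by omega), ih (by omega)]
      simp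

lemma fallEval (ℓ : ℕ) (x : ℝ) :
    (descPochhammer ℝ ℓ).eval x
      = ∑ j ∈ Finset.range (ℓ+1), (stirling1 ℓ j : ℝ) * (-1)^(ℓ-j) * x^j := by
  induction ℓ with
  | zero => simp [stirling1]
  | succ ℓ ih =>
    have hlast : stirling1 ℓ (ℓ+1) = 0 := stirling1_eq_zero (by omega)
    have hz : (ℓ:ℝ) * (stirling1 ℓ 0 : ℝ) = 0 := by
      cases ℓ with
      | zero => simp
      | succ n => show _ * ((0:ℕ):ℝ) = 0; simp
    set U : ℝ := ∑ t ∈ Finset.range (ℓ+1), (stirling1 ℓ t : ℝ) * (-1)^(ℓ-t) * x^t with hU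
    set A : ℝ := ∑ t ∈ Finset.range (ℓ+1), (stirling1 ℓ (t+1) : ℝ) * (-1)^(ℓ-t) * x^(t+1)
      with hA
    set B : ℝ := ∑ t ∈ Finset.range (ℓ+1), (stirling1 ℓ t : ℝ) * (-1)^(ℓ-t) * x^(t+1)
      with hB
    have hTel : A + U = (stirling1 ℓ 0 : ℝ) * (-1)^ℓ := by
      rw [hA, hU, ← Finset.sum_add_distrib]
      have hu := Finset.sum_range_sub'
        (fun t => (stirling1 ℓ t : ℝ) * (-1)^(ℓ-t) * x^t) (ℓ+1)
      rw [Finset.sum_congr rfl (fun t ht => ?_), hu]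
      · simp [hlast]
      · simp only [Finset.mem_range] at ht
        show (stirling1 ℓ (t+1) : ℝ) * (-1)^(ℓ-t) * x^(t+1)
            + (stirling1 ℓ t : ℝ) * (-1)^(ℓ-t) * x^t
          = (stirling1 ℓ t : ℝ) * (-1)^(ℓ-t) * x^t
            - (stirling1 ℓ (t+1) : ℝ) * (-1)^(ℓ-(t+1)) * x^(t+1)
        rcases Nat.lt_or_ge t ℓ with h | h
        · have hpow : (-1:ℝ)^(ℓ-t) = -(-1:ℝ)^(ℓ-(t+1)) := by
            rw [show ℓ - t = (ℓ-(t+1))+1 by omega, pow_succ]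
            ring
          rw [hpow]; ring
        · have ht' : t = ℓ := by omega
          subst ht'
          rw [hlast]
          push_cast
          ring
    have hSB : U * x = B := by
      rw [hU, hB, Finset.sum_mul]
      exact Finset.sum_congr rfl fun t _ => by ring
    have hR : ∑ j ∈ Finset.range (ℓ+1+1), (stirling1 (ℓ+1) j : ℝ) * (-1)^(ℓ+1-j) * x^j
        = (ℓ:ℝ) * A + B := by
      rw [Finset.sum_range_succ']
      have h0 : (stirling1 (ℓ+1) 0 : ℝ) = 0 := by
        show ((0:ℕ):ℝ) = 0; simp
      rw [h0, zero_mul, zero_mul, add_zero, hA, hB, Finset.mul_sum, ← Finset.sum_add_distrib]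
      refine Finset.sum_congr rfl fun t ht => ?_
      have hrec : stirling1 (ℓ+1) (t+1) = ℓ * stirling1 ℓ (t+1) + stirling1 ℓ t := rfl
      rw [hrec, Nat.succ_sub_succ ℓ t]
      push_cast
      ring
    rw [descPochhammer_succ_right, eval_mul, ih, eval_sub, eval_X, eval_natCast]
    rw [hR]
    linear_combination hSB - (ℓ:ℝ) * hTel - (-1:ℝ)^ℓ * hz

lemma stirl (d ℓ : ℕ) : (ℓ.factorial : ℝ) * stirling2 d ℓ = Aa ℓ d := by
  rw [stirling2, Aa, ← mul_assoc, mul_one_div_cancel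
    (Nat.cast_ne_zero.2 ℓ.factorial_ne_zero), one_mul]

lemma poly_eq (d : ℕ) :
    ∑ ℓ ∈ Finset.range (d+1), C (stirling2 d ℓ) * descPochhammer ℝ ℓ = (X:ℝ[X])^d := by
  apply Polynomial.eq_of_infinite_eval_eq
  apply (Set.infinite_range_of_injective (Nat.cast_injective (R := ℝ))).mono
  rintro x ⟨N, rfl⟩
  simp only [Set.mem_setOf_eq, eval_finset_sum, eval_mul, eval_C, eval_pow, eval_X,
    descPochhammer_eval_eq_descFactorial]
  rw [← comb d N]
  refine Finset.sum_congr rfl fun ℓ _ => ?_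
  rw [Nat.descFactorial_eq_factorial_mul_choose]
  push_cast
  rw [← stirl d ℓ]
  ring

lemma int_desc (ℓ : ℕ) :
    ∫ x in (0:ℝ)..1, (descPochhammer ℝ ℓ).eval x = (ℓ.factorial : ℝ) * gregory ℓ := by
  rw [intervalIntegral.integral_congr
    (g := fun x => ∑ j ∈ Finset.range (ℓ+1), (stirling1 ℓ j : ℝ) * (-1)^(ℓ-j) * x^j)
    (fun x _ => fallEval ℓ x)]
  rw [intervalIntegral.integral_finset_sum
    (f := fun j x => (stirling1 ℓ j : ℝ) * (-1)^(ℓ-j) * x^j) (fun j _ => ((continuous_const.mul (continuous_pow j)).intervalIntegrable _ _))]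
  rw [gregory, ← mul_assoc, mul_one_div_cancel
    (Nat.cast_ne_zero.2 ℓ.factorial_ne_zero), one_mul]
  refine Finset.sum_congr rfl fun j _ => ?_
  rw [intervalIntegral.integral_const_mul, integral_pow]
  norm_num
  ring

lemma key (d : ℕ) :
    ∑ ℓ ∈ Finset.range (d+1), gregory ℓ * Aa ℓ d = 1/((d:ℝ)+1) := by
  have h := congrArg (fun p : ℝ[X] => ∫ x in (0:ℝ)..1, eval x p) (poly_eq d)
  simp only [eval_finset_sum, eval_mul, eval_C, eval_pow, eval_X] at h
  rw [intervalIntegral.integral_finset_sum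
    (f := fun ℓ x => stirling2 d ℓ * eval x (descPochhammer ℝ ℓ)) (fun ℓ _ => (continuous_const.mul (descPochhammer ℝ ℓ).continuous).intervalIntegrable _ _),
    integral_pow] at h
  have h2 : ∀ ℓ ∈ Finset.range (d+1),
      (∫ x in (0:ℝ)..1, stirling2 d ℓ * (descPochhammer ℝ ℓ).eval x)
        = gregory ℓ * Aa ℓ d := by
    intro ℓ _
    rw [intervalIntegral.integral_const_mul, int_desc, ← stirl d ℓ]
    ring
  rw [Finset.sum_congr rfl h2] at h
  rw [h]
  norm_num

lemma key' {d n : ℕ} (hdn : d < n) :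
    ∑ ℓ ∈ Finset.range n, gregory ℓ * (ℓ.factorial : ℝ) * stirling2 d ℓ = 1/((d:ℝ)+1) := by
  rw [← key d]
  rw [← Finset.sum_subset (Finset.range_subset_range.2 (show d+1 ≤ n by omega))
    (fun ℓ _ hℓ => by
      rw [mul_assoc, stirl, Aa_vanish ℓ d (by simp only [Finset.mem_range] at hℓ; omega),
        mul_zero])]
  exact Finset.sum_congr rfl fun ℓ _ => by rw [mul_assoc, stirl]



open fwdDiff

lemma polyDelta_eval_iter (ℓ : ℕ) (p : Polynomial ℝ) :
    (fun x => (polyDelta^[ℓ] p).eval x) = (fwdDiff 1)^[ℓ] (fun y => p.eval y) := by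
  induction ℓ generalizing p with
  | zero => simp
  | succ ℓ ih =>
    rw [Function.iterate_succ_apply', Function.iterate_succ_apply']
    funext x
    have : (fun x => ((polyDelta (polyDelta^[ℓ] p) : Polynomial ℝ)).eval x)
        = fwdDiff 1 (fun y => (polyDelta^[ℓ] p).eval y) := by
      funext y
      simp only [polyDelta, fwdDiff, eval_sub, eval_comp, eval_add, eval_X, eval_one]
    rw [congrFun this x, ih p]

lemma polyDelta_iter_eq (ℓ : ℕ) (p : Polynomial ℝ) :
    polyDelta^[ℓ] p
      = ∑ i ∈ Finset.range (ℓ+1),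
          ((-1:ℝ)^(ℓ-i) * (ℓ.choose i : ℝ)) • p.comp (X + C (i:ℝ)) := by
  apply Polynomial.funext
  intro r
  have h1 := congrFun (polyDelta_eval_iter ℓ p) r
  rw [h1, fwdDiff_iter_eq_sum_shift]
  rw [eval_finset_sum]
  refine Finset.sum_congr rfl fun i _ => ?_
  rw [eval_smul, eval_comp, eval_add, eval_X, eval_C]
  rw [zsmul_eq_mul]
  push_cast
  rw [smul_eq_mul, nsmul_eq_mul, mul_one]

lemma polyDelta_iter_sum {ι : Type*} (s : Finset ι) (f : ι → Polynomial ℝ) (ℓ : ℕ) :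
    polyDelta^[ℓ] (∑ p ∈ s, f p) = ∑ p ∈ s, polyDelta^[ℓ] (f p) := by
  simp only [polyDelta_iter_eq, Polynomial.sum_comp, Finset.smul_sum]
  exact Finset.sum_comm

lemma coeff_polyDelta_iter (ℓ m j : ℕ) (b : ℝ) :
    (polyDelta^[ℓ] (C b * X^m)).coeff j = b * (m.choose j : ℝ) * Aa ℓ (m-j) := by
  rw [polyDelta_iter_eq, finset_sum_coeff]
  rw [Aa, Finset.mul_sum]
  refine Finset.sum_congr rfl fun i _ => ?_
  rw [coeff_smul, mul_comp, C_comp, pow_comp, X_comp, smul_eq_mul, coeff_C_mul,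
    coeff_X_add_C_pow]
  ring

lemma keyAa {d n : ℕ} (hdn : d < n) :
    ∑ ℓ ∈ Finset.range n, gregory ℓ * Aa ℓ d = 1/((d:ℝ)+1) := by
  rw [← key d]
  rw [← Finset.sum_subset (Finset.range_subset_range.2 (show d+1 ≤ n by omega))
    (fun ℓ _ hℓ => by
      rw [Aa_vanish ℓ d (by simp only [Finset.mem_range] at hℓ; omega), mul_zero])]

lemma Aa_one_pos {e : ℕ} (he : 1 ≤ e) : Aa 1 e = 1 := by
  rw [Aa]
  rw [Finset.sum_range_succ, Finset.sum_range_succ, Finset.sum_range_zero]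
  norm_num [zero_pow (by omega : e ≠ 0)]

theorem sigma_coeff_vanish (k n : ℕ) (τ : Polynomial ℝ) (hτ : τ.natDegree ≤ k + n + 1) :
    (∀ j : ℕ, k + 1 ≤ j → j ≤ k + n →
      (polyDelta τ
        - ∑ ℓ ∈ Finset.range n, gregory ℓ • polyDelta^[ℓ] (Polynomial.derivative τ)).coeff j
        = 0) ∧
    (∀ j m : ℕ, k + 1 ≤ j → j ≤ m → m ≤ k + n →
      1 - ((m + 1 - j : ℕ) : ℝ)
          * ∑ ℓ ∈ Finset.range n, gregory ℓ * (ℓ.factorial : ℝ) * stirling2 (m - j) ℓ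
        = 0) := by
  constructor
  · intro j hj1 hj2
    set M := k + n + 2 with hM
    have hτs : τ = ∑ p ∈ Finset.range M, C (τ.coeff p) * X^p := by
      conv_lhs => rw [τ.as_sum_range' M (by omega)]
      exact Finset.sum_congr rfl fun p _ => (C_mul_X_pow_eq_monomial).symm
    rw [coeff_sub]
    have h1 : (polyDelta τ).coeff j
        = ∑ p ∈ Finset.range M, τ.coeff p * (p.choose j : ℝ) * Aa 1 (p - j) := by
      conv_lhs => rw [hτs]
      rw [← Function.iterate_one polyDelta, polyDelta_iter_sum, finset_sum_coeff]
      exact Finset.sum_congr rfl fun p _ => coeff_polyDelta_iter 1 p j _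
    have hD : derivative τ = ∑ p ∈ Finset.range M, C (τ.coeff p * p) * X^(p-1) := by
      conv_lhs => rw [hτs]
      rw [map_sum]
      exact Finset.sum_congr rfl fun p _ => derivative_C_mul_X_pow _ _
    have h3 : ∀ ℓ : ℕ, (polyDelta^[ℓ] (derivative τ)).coeff j
        = ∑ p ∈ Finset.range M,
            τ.coeff p * (p:ℝ) * ((p-1).choose j : ℝ) * Aa ℓ (p-1-j) := by
      intro ℓ
      rw [hD, polyDelta_iter_sum, finset_sum_coeff]
      refine Finset.sum_congr rfl fun p _ => ?_
      exact coeff_polyDelta_iter ℓ (p-1) j _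
    have h2 : (∑ ℓ ∈ Finset.range n, gregory ℓ • polyDelta^[ℓ] (derivative τ)).coeff j
        = ∑ p ∈ Finset.range M, ∑ ℓ ∈ Finset.range n,
            gregory ℓ * (τ.coeff p * (p:ℝ) * ((p-1).choose j : ℝ) * Aa ℓ (p-1-j)) := by
      rw [finset_sum_coeff]
      rw [Finset.sum_congr rfl (fun ℓ _ => by
        rw [coeff_smul, smul_eq_mul, h3 ℓ, Finset.mul_sum])]
      exact Finset.sum_comm
    rw [h1, h2, ← Finset.sum_sub_distrib]
    apply Finset.sum_eq_zero
    intro p hp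
    simp only [Finset.mem_range] at hp
    rcases le_or_gt p j with hpj | hpj
    · rw [show p - j = 0 by omega, Aa_vanish 1 0 (by omega), mul_zero]
      rw [Finset.sum_eq_zero (fun ℓ _ => ?_), sub_zero]
      match p, hpj with
      | 0, _ => simp
      | (q+1), hpj =>
        rw [show q+1-1 = q by omega, Nat.choose_eq_zero_of_lt (show q < j by omega)]
        simp
    · have hd : p - 1 - j < n := by omega
      have hkey := keyAa hd
      have hAa : Aa 1 (p-j) = 1 := Aa_one_pos (by omega)
      have hc : (p:ℝ) * ((p-1).choose j : ℝ) = (p.choose j : ℝ) * ((p:ℝ) - j) := by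
        obtain ⟨m, rfl⟩ : ∃ m, p = m + 1 := ⟨p-1, by omega⟩
        have hnat : (m+1) * (m.choose j) = (m+1).choose j * (m+1-j) := by
          rw [Nat.add_one_mul_choose_eq m j]
          exact Nat.choose_succ_right_eq (m+1) j
        have hcast := congrArg (fun t : ℕ => (t:ℝ)) hnat
        push_cast [Nat.cast_sub (show j ≤ m+1 by omega)] at hcast
        rw [show (m+1:ℕ)-1 = m by omega]
        push_cast
        linarith [hcast]
      have hsum : ∑ ℓ ∈ Finset.range n,
            gregory ℓ * (τ.coeff p * (p:ℝ) * ((p-1).choose j : ℝ) * Aa ℓ (p-1-j))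
          = τ.coeff p * (p:ℝ) * ((p-1).choose j : ℝ) * (1/(((p-1-j:ℕ):ℝ)+1)) := by
        rw [← hkey, Finset.mul_sum]
        exact Finset.sum_congr rfl fun ℓ _ => by ring
      have hd1 : ((p-1-j:ℕ):ℝ) + 1 = (p:ℝ) - j := by
        rw [show p - 1 - j = p - (j+1) by omega]
        push_cast [Nat.cast_sub (show j+1 ≤ p by omega)]
        ring
      have hne : (p:ℝ) - j ≠ 0 := by
        have : (j:ℝ) < p := by exact_mod_cast hpj
        linarith
      rw [hAa, hsum, hd1, mul_one]
      field_simp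
      linear_combination (-(τ.coeff p)) * hc
  · intro j m hj1 hjm hm2
    have hd : m - j < n := by omega
    rw [key' hd]
    have he : (m + 1 - j : ℕ) = (m - j) + 1 := by omega
    rw [he]
    have hne : ((m-j:ℕ):ℝ) + 1 ≠ 0 := by positivity
    rw [Nat.cast_add, Nat.cast_one, mul_one_div, div_self hne, sub_self]
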